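/- The function δ(n) = s(n, π/2) − π(n) is nonincreasing for n > 4, where s(n,x) = Σ_{k=1}^n sin²(x·(k-1)!/k) and π(n) is the prime counting function. -/

import Mathlib

noncomputable def s (n : ℕ) (x : ℝ) : ℝ :=
  ∑ k ∈ Finset.Icc 1 n, Real.sin (x * (k - 1).factorial / k) ^ 2

/-!
The `k`-th summand of `s n (π / 2)` is `sin² (π (k - 1)! / (2k))`, which is at most `1`, and
vanishes when `2k ∣ (k - 1)!`. That divisibility holds for every composite `k > 4`, so passing
from `n` to `n + 1 > 4` adds at most `1` to `s` and exactly `1` to `π` when `n + 1` is prime,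
and adds `0` to both otherwise.
-/

open Nat Real

theorem Nat.mul_dvd_factorial {a b n : ℕ} (ha : 0 < a) (hab : a < b) (hbn : b ≤ n) :
    a * b ∣ n ! := by
  have hb : b ≠ 0 := by omega
  have hab' : a * b ∣ b ! := by
    rw [← mul_factorial_pred hb, mul_comm a b]
    exact mul_dvd_mul_left b (dvd_factorial ha (by omega))
  exact hab'.trans (factorial_dvd_factorial hbn)

theorem Nat.two_mul_dvd_factorial_pred {k : ℕ} (hk : 4 < k) (hk' : ¬ k.Prime) :
    2 * k ∣ (k - 1)! := by
  set p := k.minFac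
  set q := k / p
  have hp : p.Prime := minFac_prime (by omega)
  have hpq : p * q = k := Nat.mul_div_cancel' (minFac_dvd k)
  have hpq_le : p ≤ q := minFac_le_div (by omega) hk'
  have hp2 := hp.two_le
  rcases Nat.lt_or_ge 2 p with hp3 | hp2'
  · -- `k = p q` with `3 ≤ p ≤ q`: the factors `p < 2q` both occur in `(k - 1)!`.
    have h3q : 3 * q ≤ k := hpq ▸ Nat.mul_le_mul_right q hp3
    have h : p * (2 * q) ∣ (k - 1)! := mul_dvd_factorial (by omega) (by omega) (by omega)
    rwa [mul_left_comm, hpq] at h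
  · -- `k = 2q` with `q ≥ 3`: use the factors `4 < q`, except for `k = 6, 8`.
    have hk2q : k = 2 * q := by rw [← hpq, show p = 2 by omega]
    rcases Nat.lt_or_ge 4 q with hq | hq
    · have h : 4 * q ∣ (k - 1)! := mul_dvd_factorial (by omega) hq (by omega)
      rwa [show 4 * q = 2 * k by omega] at h
    · obtain rfl | rfl : k = 6 ∨ k = 8 := by omega
      all_goals decide

theorem Real.sin_pi_div_two_mul_div_eq_zero {N k : ℕ} (h : 2 * k ∣ N) :
    sin (π / 2 * N / k) = 0 := by
  obtain ⟨t, rfl⟩ := h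
  rcases Nat.eq_zero_or_pos k with rfl | hk
  · simp
  have : π / 2 * ((2 * k * t : ℕ) : ℝ) / k = t * π := by
    push_cast
    field_simp
  rw [this, sin_nat_mul_pi]

theorem s_succ (n : ℕ) (x : ℝ) : s (n + 1) x = s n x + sin (x * n ! / (n + 1 : ℕ)) ^ 2 := by
  rw [s, s, Finset.sum_Icc_succ_top (by omega), Nat.add_sub_cancel]

theorem Nat.primeCounting_succ (n : ℕ) :
    (primeCounting (n + 1) : ℝ) = primeCounting n + if (n + 1).Prime then 1 else 0 := by
  simp [primeCounting, primeCounting', count_succ]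

theorem sin_sq_pi_div_two_mul_factorial_le {n : ℕ} (hn : 4 ≤ n) :
    sin (π / 2 * n ! / (n + 1 : ℕ)) ^ 2 ≤ if (n + 1).Prime then 1 else 0 := by
  split_ifs with hprime
  · exact sin_sq_le_one _
  · have h := two_mul_dvd_factorial_pred (by omega) hprime
    rw [Nat.add_sub_cancel] at h
    rw [sin_pi_div_two_mul_div_eq_zero h, zero_pow two_ne_zero]

theorem stmt_5 (n m : ℕ) (hn : 4 < n) (hnm : n ≤ m) :
    s m (Real.pi / 2) - Nat.primeCounting m
      ≤ s n (Real.pi / 2) - Nat.primeCounting n := by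
  have hstep : ∀ k ≥ 4,
      s (k + 1) (π / 2) - primeCounting (k + 1) ≤ s k (π / 2) - primeCounting k := by
    intro k hk
    rw [s_succ, primeCounting_succ]
    linarith [sin_sq_pi_div_two_mul_factorial_le hk]
  exact antitoneOn_nat_Ici_of_succ_le (f := fun k ↦ s k (π / 2) - primeCounting k) hstep
    hn.le (hn.le.trans hnm) hnm
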